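/- arXiv:1611.05785 — 3 statements merged into one kernel-verified Lean document; each statement's English description precedes it below -/
import Mathlib

section
/- Let p > q be odd primes and let Q be a right power alternative loop of order pq. Then Q has at most one subloop of order p. -/
/-- A loop: binary operation with two-sided identity and bijective
left and right translations. -/
class LoopStr (Q : Type*) extends Mul Q, One Q where
  one_mul : ∀ a : Q, 1 * a = a
  mul_one : ∀ a : Q, a * 1 = a
  mulLeft_bij : ∀ a : Q, Function.Bijective (fun x : Q => a * x)
  mulRight_bij : ∀ a : Q, Function.Bijective (fun x : Q => x * a)

variable {Q : Type*} [LoopStr Q]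

/-- The right translation `R_a : x ↦ x·a` as a permutation of `Q`. -/
noncomputable def Rt (a : Q) : Equiv.Perm Q :=
  Equiv.ofBijective _ (LoopStr.mulRight_bij a)

/-- Natural powers in a loop. -/
def lpow (a : Q) : ℕ → Q
  | 0 => 1
  | n + 1 => lpow a n * a

/-- Integer powers in a loop with inverses. -/
def lzpow [Inv Q] (a : Q) : ℤ → Q
  | Int.ofNat n => lpow a n
  | Int.negSucc n => (lpow a (n + 1))⁻¹

/-- A subloop: a subset containing the identity and closed under
multiplication and both divisions. -/
structure Subloop (Q : Type*) [LoopStr Q] where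
  carrier : Set Q
  one_mem : (1 : Q) ∈ carrier
  mul_mem : ∀ a ∈ carrier, ∀ b ∈ carrier, a * b ∈ carrier
  ldiv_mem : ∀ a ∈ carrier, ∀ b ∈ carrier, ∀ x : Q, a * x = b → x ∈ carrier
  rdiv_mem : ∀ a ∈ carrier, ∀ b ∈ carrier, ∀ x : Q, x * a = b → x ∈ carrier

/-!
In a right power alternative loop `R_{u^i} = R_u^i` and `R` is injective, so `u^i = 1` exactly
when `R_u^i = 1`: the cyclic group `⟨R_u⟩` acts freely on `Q`, and it preserves every subloop
containing `u`. Hence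
the order of `R_u` divides the order of such a subloop, so a subloop `S` of prime order `p` is
`{u^i}` for each `u ≠ 1` in it and `{R_b : b ∈ S}` is the group `⟨R_u⟩`. Two subloops of order `p`
sharing a non-identity element therefore coincide. If they meet only in `1`, then `a·b = a'·b'`
with `a, a' ∈ S₁`, `b, b' ∈ S₂` gives `a' = a·c` with `R_c = R_{b'}⁻¹ R_b`, `c ∈ S₁ ∩ S₂`, so the
multiplication map `S₁ × S₂ → Q` is injective and `p² ≤ pq`, contradicting `q < p`.
-/

open Equiv MulAction

theorem Equiv.Perm.orderOf_dvd_natCard {α : Type*} (σ : Perm α)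
    (hfree : ∀ (i : ℤ) (x : α), (σ ^ i) x = x → σ ^ i = 1) :
    orderOf σ ∣ Nat.card α := by
  have hstab : ∀ x : α, stabilizer (Subgroup.zpowers σ) x = ⊥ := by
    intro x
    refine (Subgroup.eq_bot_iff_forall _).2 fun ⟨g, hg⟩ hgx ↦ ?_
    obtain ⟨i, rfl⟩ := Subgroup.mem_zpowers_iff.1 hg
    exact Subtype.ext (hfree i x hgx)
  rw [← Nat.card_zpowers, Nat.card_congr (selfEquivOrbitsQuotientProd hstab), Nat.card_prod]
  exact dvd_mul_left _ _

theorem Equiv.Perm.orderOf_dvd_ncard {α : Type*} (σ : Perm α) {s : Set α}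
    (hs : ∀ x, σ x ∈ s ↔ x ∈ s) (hfree : ∀ (i : ℤ), ∀ x ∈ s, (σ ^ i) x = x → σ ^ i = 1) :
    orderOf σ ∣ s.ncard := by
  rcases s.eq_empty_or_nonempty with rfl | ⟨x₀, hx₀⟩
  · simp
  set τ : Perm s := σ.subtypePerm hs
  have hτ : ∀ i : ℤ, τ ^ i = 1 ↔ σ ^ i = 1 := fun i ↦ by
    refine ⟨fun h ↦ hfree i x₀ hx₀ ?_, fun h ↦ ?_⟩
    · simpa [τ] using congrArg (fun f : Perm s ↦ (f ⟨x₀, hx₀⟩ : α)) h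
    · ext x
      simp [τ, h]
  have hord : orderOf τ = orderOf σ :=
    orderOf_eq_orderOf_iff.2 fun n ↦ by exact_mod_cast hτ n
  rw [← hord, ← Nat.card_coe_set_eq]
  refine τ.orderOf_dvd_natCard fun i x hx ↦ (hτ i).2 (hfree i x x.2 ?_)
  simpa [τ] using congrArg Subtype.val hx

lemma LoopStr.mul_left_cancel {a x y : Q} (h : a * x = a * y) : x = y :=
  (LoopStr.mulLeft_bij a).injective h

lemma Rt_apply (a x : Q) : Rt a x = x * a := rfl

lemma Rt_one : Rt (1 : Q) = 1 :=
  Equiv.ext LoopStr.mul_one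

lemma Rt_injective : Function.Injective (Rt : Q → Perm Q) := fun a b h ↦ by
  simpa [Rt_apply, LoopStr.one_mul] using congrArg (fun f : Perm Q ↦ f 1) h

lemma Subloop.ext {S T : Subloop Q} (h : S.carrier = T.carrier) : S = T := by
  cases S; cases T
  subst h
  rfl

lemma Subloop.mul_mem_iff (S : Subloop Q) {u : Q} (hu : u ∈ S.carrier) (x : Q) :
    x * u ∈ S.carrier ↔ x ∈ S.carrier :=
  ⟨fun h ↦ S.rdiv_mem _ hu _ h x rfl, fun h ↦ S.mul_mem _ h _ hu⟩

lemma Subloop.lpow_mem (S : Subloop Q) {u : Q} (hu : u ∈ S.carrier) (n : ℕ) :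
    lpow u n ∈ S.carrier := by
  induction n with
  | zero => exact S.one_mem
  | succ n ih => exact S.mul_mem _ ih _ hu

def IsRightPowerAlternative (Q : Type*) [LoopStr Q] [Inv Q] : Prop :=
  ∀ u : Q, ∀ i : ℤ, (Rt u) ^ i = Rt (lzpow u i)

namespace IsRightPowerAlternative

variable [Inv Q]

lemma Rt_lpow (hQ : IsRightPowerAlternative Q) (u : Q) (n : ℕ) :
    Rt (lpow u n) = Rt u ^ n := by
  rw [← zpow_natCast, hQ]
  rfl

lemma zpow_Rt_eq_one_of_apply_eq_self (hQ : IsRightPowerAlternative Q) {u x : Q} {i : ℤ}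
    (h : (Rt u ^ i) x = x) : Rt u ^ i = 1 := by
  rw [hQ, Rt_apply] at h
  rw [hQ]
  rw [LoopStr.mul_left_cancel (h.trans (LoopStr.mul_one x).symm), Rt_one]

lemma orderOf_Rt_dvd_ncard (hQ : IsRightPowerAlternative Q) (S : Subloop Q) {u : Q}
    (hu : u ∈ S.carrier) : orderOf (Rt u) ∣ S.carrier.ncard :=
  (Rt u).orderOf_dvd_ncard (S.mul_mem_iff hu) fun _ _ _ ↦ hQ.zpow_Rt_eq_one_of_apply_eq_self

variable {p : ℕ}

lemma orderOf_Rt_eq (hQ : IsRightPowerAlternative Q) (hp : p.Prime) (S : Subloop Q)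
    (hS : S.carrier.ncard = p) {u : Q} (hu : u ∈ S.carrier) (hu1 : u ≠ 1) :
    orderOf (Rt u) = p := by
  have hdvd := hQ.orderOf_Rt_dvd_ncard S hu
  rw [hS] at hdvd
  refine (hp.eq_one_or_self_of_dvd _ hdvd).resolve_left fun h ↦ hu1 ?_
  exact Rt_injective ((orderOf_eq_one_iff.1 h).trans Rt_one.symm)

lemma image_Rt_eq_zpowers [Finite Q] (hQ : IsRightPowerAlternative Q) (hp : p.Prime)
    (S : Subloop Q) (hS : S.carrier.ncard = p) {u : Q} (hu : u ∈ S.carrier) (hu1 : u ≠ 1) :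
    Rt '' S.carrier = Subgroup.zpowers (Rt u) := by
  have hord := hQ.orderOf_Rt_eq hp S hS hu hu1
  have hsub : (Subgroup.zpowers (Rt u) : Set (Perm Q)) ⊆ Rt '' S.carrier := by
    intro g hg
    obtain ⟨n, rfl⟩ := mem_powers_iff_mem_zpowers.2 hg
    exact ⟨lpow u n, S.lpow_mem hu n, hQ.Rt_lpow u n⟩
  refine (Set.eq_of_subset_of_ncard_le hsub ?_ ((Set.toFinite _).image _)).symm
  rw [Set.ncard_image_of_injective _ Rt_injective, hS, ← Nat.card_coe_set_eq,
    SetLike.coe_sort_coe, Nat.card_zpowers, hord]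

end IsRightPowerAlternative

lemma Subloop.mul_injective_of_inter_subset_one {S T : Subloop Q}
    (hT : ∃ H : Subgroup (Perm Q), Rt '' T.carrier = H)
    (hST : ∀ w ∈ S.carrier, w ∈ T.carrier → w = 1) :
    Function.Injective fun z : S.carrier × T.carrier ↦ z.1.1 * z.2.1 := by
  rintro ⟨⟨a, ha⟩, ⟨b, hb⟩⟩ ⟨⟨a', ha'⟩, ⟨b', hb'⟩⟩ (hab : a * b = a' * b')
  obtain ⟨H, hH⟩ := hT
  have hRt_mem : ∀ x ∈ T.carrier, Rt x ∈ H := fun x hx ↦ by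
    rw [← SetLike.mem_coe, ← hH]
    exact Set.mem_image_of_mem _ hx
  obtain ⟨c, hcT, hc⟩ : (Rt b')⁻¹ * Rt b ∈ Rt '' T.carrier := by
    rw [hH]
    exact H.mul_mem (H.inv_mem (hRt_mem b' hb')) (hRt_mem b hb)
  have hac : a * c = a' := by
    rw [← Rt_apply, hc, Perm.mul_apply, Perm.inv_eq_iff_eq]
    exact hab
  obtain rfl : a = a' := by
    rw [← hac, hST c (S.ldiv_mem _ ha _ ha' _ hac) hcT, LoopStr.mul_one]
  obtain rfl : b = b' := LoopStr.mul_left_cancel hab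
  rfl

theorem stmt3_general {p q : ℕ} (hp : p.Prime)
    (hlt : q < p) (Q : Type*) [LoopStr Q] [Inv Q] [Fintype Q]
    (hcard : Fintype.card Q = p * q)
    (hrpa : ∀ u : Q, ∀ i : ℤ, (Rt u) ^ i = Rt (lzpow u i))
    (S₁ S₂ : Subloop Q) (h1 : S₁.carrier.ncard = p) (h2 : S₂.carrier.ncard = p) :
    S₁ = S₂ := by
  have hQ : IsRightPowerAlternative Q := hrpa
  by_cases hW : ∃ w ∈ S₁.carrier, w ∈ S₂.carrier ∧ w ≠ 1
  · obtain ⟨w, hw₁, hw₂, hw1⟩ := hW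
    refine Subloop.ext (Set.image_injective.2 Rt_injective ?_)
    rw [hQ.image_Rt_eq_zpowers hp S₁ h1 hw₁ hw1, hQ.image_Rt_eq_zpowers hp S₂ h2 hw₂ hw1]
  · push Not at hW
    obtain ⟨v, hv₂, hv1⟩ := Set.exists_ne_of_one_lt_ncard (h2 ▸ hp.one_lt) 1
    have hinj := Subloop.mul_injective_of_inter_subset_one
      ⟨_, hQ.image_Rt_eq_zpowers hp S₂ h2 hv₂ hv1⟩ hW
    have hle := Nat.card_le_card_of_injective _ hinj
    rw [Nat.card_prod, Nat.card_coe_set_eq, Nat.card_coe_set_eq, h1, h2,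
      Nat.card_eq_fintype_card, hcard] at hle
    exact absurd (Nat.le_of_mul_le_mul_left hle hp.pos) hlt.not_ge

/-- Let `p > q` be odd primes and `Q` a right power alternative loop
(`R_u^i = R_{u^i}` for all integers `i`) of order `pq`. Then `Q` has at most
one subloop of order `p`. -/
theorem stmt3 {p q : ℕ} (hp : p.Prime) (hq : q.Prime) (hpo : Odd p) (hqo : Odd q)
    (hlt : q < p) (Q : Type*) [LoopStr Q] [Inv Q] [Fintype Q]
    (hcard : Fintype.card Q = p * q)
    (hrpa : ∀ u : Q, ∀ i : ℤ, (Rt u) ^ i = Rt (lzpow u i))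
    (S₁ S₂ : Subloop Q) (h1 : S₁.carrier.ncard = p) (h2 : S₂.carrier.ncard = p) :
    S₁ = S₂ :=
  stmt3_general hp hlt Q hcard hrpa S₁ S₂ h1 h2
end

section
/- Let Q be a finite loop such that the right multiplication group Mlt_ρ(Q) is nilpotent. Then for every prime r dividing |Q|, there is a normal subloop of Q of index r. -/
variable {Q : Type*} [LoopStr Q]

/-- A subloop `S` is normal iff `xS = Sx`, `(xS)y = x(Sy)` and
`x(yS) = (xy)S` for all `x, y`. -/
def IsNormalSubloop (S : Set Q) : Prop :=
  (∀ x : Q, (fun s => x * s) '' S = (fun s => s * x) '' S) ∧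
  (∀ x y : Q, (fun s => (x * s) * y) '' S = (fun s => x * (s * y)) '' S) ∧
  (∀ x y : Q, (fun s => x * (y * s)) '' S = (fun s => (x * y) * s) '' S)

/-!
Let `G = Mlt_ρ(Q)`. As `G` is transitive on `Q`, the stabilizer of `1` has index `|Q|`, which `r`
divides. In a finite nilpotent group every subgroup `H` with `r ∣ [G : H]` lies in a normal
subgroup `M` of index `r`: if `[G : H] ≠ r`, pick a prime `q` with `r q ∣ [G : H]` and a central
element `z` of order `q`; then `r` still divides `[G : H⟨z⟩]`, and one concludes in `G ⧸ ⟨z⟩`.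
For such an `M` containing the stabilizer of `1`, `x ↦ (R_x M)⁻¹` is a surjective homomorphism
from `Q` onto the group `G ⧸ M`, because `R_{xy}` and `R_y R_x` agree at `1`. Its kernel is a
normal subloop whose cosets are the fibres, so it has index `|G ⧸ M| = r`.
-/

namespace Subgroup

open scoped commutatorElement

variable {G : Type*} [Group G]

theorem isCoatom_of_prime_index {H : Subgroup G} (hH : H.index.Prime) : IsCoatom H := by
  refine ⟨fun h => hH.ne_one (index_eq_one.mpr h), fun K hK => index_eq_one.mp ?_⟩
  have hmul := relIndex_mul_index hK.le
  rcases hH.eq_one_or_self_of_dvd _ (index_dvd_of_le hK.le) with hK1 | hKH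
  · exact hK1
  · rw [hKH] at hmul
    have : H.relIndex K = 1 := by
      simpa using Nat.eq_of_mul_eq_mul_right hH.pos (hmul.trans (one_mul _).symm)
    exact absurd (relIndex_eq_one.mp this) hK.not_ge

theorem relIndex_sup_dvd_card [Finite G] (H N : Subgroup G) [N.Normal] :
    H.relIndex (H ⊔ N) ∣ Nat.card N := by
  have hH := relIndex_mul_relIndex ⊥ H (H ⊔ N) bot_le le_sup_left
  have hN := relIndex_mul_relIndex ⊥ N (H ⊔ N) bot_le le_sup_right
  have hHN := relIndex_mul_relIndex ⊥ (H ⊓ N) H bot_le inf_le_left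
  rw [relIndex_sup_right, ← inf_relIndex_left H N] at hN
  simp only [relIndex_bot_left] at hH hN hHN
  have hpos : 0 < (H ⊓ N).relIndex H := Nat.pos_of_mul_pos_left (hHN ▸ Nat.card_pos)
  refine Dvd.intro_left (Nat.card ↥(H ⊓ N)) (Nat.eq_of_mul_eq_mul_right hpos ?_)
  rw [hN, ← hH, ← hHN]
  ring

theorem Normal.inf_center_ne_bot [Group.IsNilpotent G] {N : Subgroup G} (hN : N.Normal)
    (hN_ne : N ≠ ⊥) : N ⊓ center G ≠ ⊥ := by
  contrapose! hN_ne
  obtain ⟨n, hn⟩ := Group.IsNilpotent.nilpotent G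
  suffices ∀ k, N ⊓ upperCentralSeries G k = ⊥ by simpa [hn] using this n
  intro k
  induction k with
  | zero => exact inf_bot_eq (a := N)
  | succ k ih =>
    rw [eq_bot_iff, ← hN_ne]
    rintro x ⟨hxN, hxZ⟩
    refine ⟨hxN, mem_center_iff.mpr fun g => ?_⟩
    have hcomm : ⁅x, g⁆ ∈ N ⊓ upperCentralSeries G k :=
      ⟨by simpa [commutatorElement_def, mul_assoc] using
        N.mul_mem hxN (hN.conj_mem x⁻¹ (N.inv_mem hxN) g), hxZ g⟩
    rw [ih, mem_bot, commutatorElement_eq_one_iff_mul_comm] at hcomm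
    exact hcomm.symm

theorem exists_mem_center_orderOf_eq [Finite G] [Group.IsNilpotent G] {q : ℕ} (hq : q.Prime)
    (hdvd : q ∣ Nat.card G) : ∃ z ∈ center G, orderOf z = q := by
  have := Fact.mk hq
  obtain ⟨P⟩ : Nonempty (Sylow q G) := inferInstance
  have hP : (P : Subgroup G).Normal := inferInstance
  have hPZ : (P : Subgroup G) ⊓ center G ≠ ⊥ := hP.inf_center_ne_bot (P.ne_bot_of_dvd_card hdvd)
  have hPZ_pgroup : IsPGroup q ↥((P : Subgroup G) ⊓ center G) := P.isPGroup'.to_le inf_le_left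
  obtain ⟨z, hz⟩ := exists_prime_orderOf_dvd_card' q
    (hPZ_pgroup.card_eq_or_dvd.resolve_left (mt card_eq_one.mp hPZ))
  exact ⟨z, z.2.2, (orderOf_coe z).trans hz⟩

theorem normal_of_le_center {N : Subgroup G} (hN : N ≤ center G) : N.Normal :=
  ⟨fun n hn g => by rwa [mem_center_iff.mp (hN hn) g, mul_inv_cancel_right]⟩

theorem exists_normal_ge_index_eq_of_prime_dvd_index [Finite G] [Group.IsNilpotent G] {r : ℕ} (hr : r.Prime) (H : Subgroup G) (hH : r ∣ H.index) :
    ∃ M : Subgroup G, M.Normal ∧ H ≤ M ∧ M.index = r := by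
  induction hn : Nat.card G using Nat.strong_induction_on generalizing G with
  | _ n ih =>
  by_cases hHr : H.index = r
  · exact ⟨H, NormalizerCondition.normal_of_coatom H Group.normalizerCondition_of_isNilpotent
      (isCoatom_of_prime_index (hHr ▸ hr)), le_rfl, hHr⟩
  obtain ⟨m, hm⟩ := hH
  have hm1 : m ≠ 1 := by rintro rfl; exact hHr (mul_one r ▸ hm)
  set q := m.minFac
  have hq : q.Prime := Nat.minFac_prime hm1
  have hrq : r * q ∣ H.index := hm ▸ mul_dvd_mul_left r m.minFac_dvd
  obtain ⟨z, hz, hzq⟩ := exists_mem_center_orderOf_eq hq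
    ((dvd_mul_left q r).trans (hrq.trans H.index_dvd_card))
  set N := zpowers z
  have : N.Normal := normal_of_le_center (zpowers_le.mpr hz)
  have hNq : Nat.card N = q := by rw [Nat.card_zpowers, hzq]
  have hrK : r ∣ (H ⊔ N).index := by
    have hHK : H.relIndex (H ⊔ N) ∣ q := hNq ▸ relIndex_sup_dvd_card H N
    rw [← relIndex_mul_index (le_sup_left : H ≤ H ⊔ N), mul_comm (H.relIndex _)] at hrq
    exact Nat.dvd_of_mul_dvd_mul_right hq.pos (hrq.trans (mul_dvd_mul_left _ hHK))
  have hcard : Nat.card (G ⧸ N) < n := by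
    rw [← hn, card_eq_card_quotient_mul_card_subgroup N, hNq]
    exact lt_mul_of_one_lt_right Nat.card_pos hq.one_lt
  let f := QuotientGroup.mk' N
  have hf : Function.Surjective f := QuotientGroup.mk'_surjective N
  have := Group.nilpotent_of_surjective f hf
  obtain ⟨M, hM, hKM, hMr⟩ := ih _ hcard ((H ⊔ N).map f)
    (by rwa [index_map_eq _ hf (by simp [f])]) rfl
  exact ⟨M.comap f, hM.comap f, le_sup_left.trans (map_le_iff_le_comap.mp hKM),
    by rwa [index_comap_of_surjective _ hf]⟩

end Subgroup

section Kernel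

variable {K : Type*} [Group K] (f : Q →ₙ* K)

theorem MulHom.map_one_of_loop : f 1 = 1 :=
  mul_eq_left.mp (by rw [← map_mul, LoopStr.one_mul])

theorem MulHom.image_mul_left_preimage (x : Q) (k : K) :
    (fun s => x * s) '' (f ⁻¹' {k}) = f ⁻¹' {f x * k} := by
  ext w
  constructor
  · rintro ⟨s, hs, rfl⟩
    simp_all
  · intro hw
    obtain ⟨s, rfl⟩ := (LoopStr.mulLeft_bij x).surjective w
    exact ⟨s, by simpa using hw, rfl⟩

theorem MulHom.image_mul_right_preimage (y : Q) (k : K) :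
    (fun s => s * y) '' (f ⁻¹' {k}) = f ⁻¹' {k * f y} := by
  ext w
  constructor
  · rintro ⟨s, hs, rfl⟩
    simp_all
  · intro hw
    obtain ⟨s, rfl⟩ := (LoopStr.mulRight_bij y).surjective w
    exact ⟨s, by simpa using hw, rfl⟩

def Subloop.ker : Subloop Q where
  carrier := f ⁻¹' {1}
  one_mem := f.map_one_of_loop
  mul_mem a ha b hb := by simp_all
  ldiv_mem a ha b hb x hx := by subst hx; simp_all
  rdiv_mem a ha b hb x hx := by subst hx; simp_all

@[simp]
theorem Subloop.ker_carrier : (Subloop.ker f).carrier = f ⁻¹' {1} := rfl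

theorem Subloop.isNormalSubloop_ker : IsNormalSubloop (Subloop.ker f).carrier := by
  refine ⟨fun x => ?_, fun x y => ?_, fun x y => ?_⟩
  · rw [Subloop.ker_carrier, f.image_mul_left_preimage, f.image_mul_right_preimage, mul_one, one_mul]
  · rw [Subloop.ker_carrier, ← Set.image_image (fun t => t * y) (fun s => x * s),
      ← Set.image_image (fun t => x * t) (fun s => s * y), f.image_mul_left_preimage,
      f.image_mul_right_preimage, f.image_mul_right_preimage, f.image_mul_left_preimage,
      mul_one, one_mul]
  · rw [Subloop.ker_carrier, ← Set.image_image (fun t => x * t) (fun s => y * s),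
      f.image_mul_left_preimage, f.image_mul_left_preimage, f.image_mul_left_preimage,
      map_mul, mul_one, mul_one]

theorem Subloop.ncard_ker_mul_card [Finite Q] (hf : Function.Surjective f) :
    (Subloop.ker f).carrier.ncard * Nat.card K = Nat.card Q := by
  have hfiber (k : K) : (f ⁻¹' {k}).ncard = (Subloop.ker f).carrier.ncard := by
    obtain ⟨x, rfl⟩ := hf k
    rw [Subloop.ker_carrier, ← mul_one (f x), ← f.image_mul_left_preimage,
      Set.ncard_image_of_injective _ (LoopStr.mulLeft_bij x).injective]
  have := Finite.of_surjective f hf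
  have := Fintype.ofFinite K
  rw [← Nat.card_congr (Equiv.sigmaFiberEquiv f), Nat.card_sigma]
  calc (Subloop.ker f).carrier.ncard * Nat.card K
      = ∑ k : K, (f ⁻¹' {k}).ncard := by simp [hfiber, mul_comm]
    _ = ∑ k : K, Nat.card {x // f x = k} :=
      Finset.sum_congr rfl fun k _ => (Nat.card_coe_set_eq (f ⁻¹' {k})).symm

end Kernel

section RightMultiplicationGroup

open MulAction

variable {G : Subgroup (Equiv.Perm Q)} (hG : ∀ a : Q, Rt a ∈ G)

noncomputable def rtElem (a : Q) : G := ⟨Rt a, hG a⟩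

@[simp]
theorem rtElem_smul (a x : Q) : rtElem hG a • x = x * a := rfl

include hG in
theorem index_stabilizer_one : (stabilizer G (1 : Q)).index = Nat.card Q := by
  have horbit : orbit G (1 : Q) = Set.univ :=
    Set.eq_univ_of_forall fun x => ⟨rtElem hG x, LoopStr.one_mul x⟩
  rw [index_stabilizer, horbit, Set.ncard_univ]

theorem mk_eq_mk_of_smul_one_eq {M : Subgroup G} (hM : stabilizer G (1 : Q) ≤ M) {a b : G}
    (h : a • (1 : Q) = b • 1) : (a : G ⧸ M) = b :=
  QuotientGroup.eq.mpr (hM (by rw [mem_stabilizer_iff, mul_smul, ← h, inv_smul_smul]))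

noncomputable def rtQuotientHom (M : Subgroup G) [M.Normal] (hM : stabilizer G (1 : Q) ≤ M) :
    Q →ₙ* G ⧸ M where
  toFun x := (rtElem hG x : G ⧸ M)⁻¹
  map_mul' x y := by
    rw [← mul_inv_rev, ← QuotientGroup.mk_mul, mk_eq_mk_of_smul_one_eq hM]
    simp [mul_smul, LoopStr.one_mul]

theorem rtQuotientHom_apply (M : Subgroup G) [M.Normal] (hM : stabilizer G (1 : Q) ≤ M) (x : Q) :
    rtQuotientHom hG M hM x = (rtElem hG x : G ⧸ M)⁻¹ :=
  rfl

theorem rtQuotientHom_surjective (M : Subgroup G) [M.Normal] (hM : stabilizer G (1 : Q) ≤ M) :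
    Function.Surjective (rtQuotientHom hG M hM) := by
  intro c
  obtain ⟨g, rfl⟩ := QuotientGroup.mk_surjective c
  refine ⟨g⁻¹ • 1, ?_⟩
  rw [rtQuotientHom_apply, inv_eq_iff_eq_inv, ← QuotientGroup.mk_inv]
  exact mk_eq_mk_of_smul_one_eq hM (LoopStr.one_mul _)

end RightMultiplicationGroup

/-- Let `Q` be a finite loop whose right multiplication group is nilpotent.
Then for every prime `r` dividing `|Q|` there is a normal subloop of `Q` of
index `r` (i.e. of order `|Q|/r`). -/
theorem stmt14 [Fintype Q]
    (hnil : Group.IsNilpotent ↥(Subgroup.closure (Set.range (Rt : Q → Equiv.Perm Q))))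
    (r : ℕ) (hr : r.Prime) (hdvd : r ∣ Fintype.card Q) :
    ∃ S : Subloop Q, IsNormalSubloop S.carrier ∧
      S.carrier.ncard * r = Fintype.card Q := by
  have hG : ∀ a : Q, Rt a ∈ Subgroup.closure (Set.range (Rt : Q → Equiv.Perm Q)) :=
    fun a => Subgroup.subset_closure ⟨a, rfl⟩
  obtain ⟨M, hM, hle, hMr⟩ := Subgroup.exists_normal_ge_index_eq_of_prime_dvd_index hr
    (MulAction.stabilizer _ (1 : Q)) (by rwa [index_stabilizer_one hG, Nat.card_eq_fintype_card])
  refine ⟨Subloop.ker (rtQuotientHom hG M hle), Subloop.isNormalSubloop_ker _, ?_⟩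
  rw [← hMr, Subgroup.index, Subloop.ncard_ker_mul_card _ (rtQuotientHom_surjective hG M hle),
    Nat.card_eq_fintype_card]
end

section
/- Let Q be a loop, let S be a subloop contained in both the right nucleus and the middle nucleus of Q, and suppose that for some u ∈ Q the map T_u : v ↦ u\(vu) satisfies S T_u = S. Then the restriction of T_u to S is an automorphism of S. -/
variable {Q : Type*} [LoopStr Q]

/-- Left division: `ldiv u v = u \ v` is the unique `x` with `u·x = v`. -/
noncomputable def ldiv (u v : Q) : Q :=
  (Equiv.ofBijective _ (LoopStr.mulLeft_bij u)).symm v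

/-- The map `T_u : v ↦ u \ (v·u)`. -/
noncomputable def Tm (u v : Q) : Q := ldiv u (v * u)

/-- The right nucleus `{w : u(vw) = (uv)w for all u, v}`. -/
def rightNucleus (Q : Type*) [LoopStr Q] : Set Q :=
  {w : Q | ∀ u v : Q, u * (v * w) = (u * v) * w}

/-- The middle nucleus `{v : u(vw) = (uv)w for all u, w}`. -/
def middleNucleus (Q : Type*) [LoopStr Q] : Set Q :=
  {v : Q | ∀ u w : Q, u * (v * w) = (u * v) * w}

lemma mul_ldiv' (u v : Q) : u * ldiv u v = v :=
  (Equiv.ofBijective _ (LoopStr.mulLeft_bij u)).apply_symm_apply v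

lemma mul_Tm (u v : Q) : u * Tm u v = v * u := mul_ldiv' u (v * u)

/-- Let `Q` be a loop, `S` a subloop contained in both the right and the
middle nucleus, and `u ∈ Q` such that `S T_u = S`. Then the restriction of
`T_u` to `S` is an automorphism of `S` (a multiplicative bijection of `S`
onto itself). -/
theorem stmt15 (S : Subloop Q)
    (hsub : S.carrier ⊆ rightNucleus Q ∩ middleNucleus Q)
    (u : Q) (himg : Tm u '' S.carrier = S.carrier) :
    Set.BijOn (Tm u) S.carrier S.carrier ∧
    ∀ a ∈ S.carrier, ∀ b ∈ S.carrier, Tm u (a * b) = Tm u a * Tm u b := by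
  have hinj : Function.Injective (Tm u) := by
    intro a b h
    have h1 : u * Tm u a = u * Tm u b := by rw [h]
    rw [mul_Tm, mul_Tm] at h1
    exact (LoopStr.mulRight_bij u).1 h1
  have hmul : ∀ a ∈ S.carrier, ∀ b ∈ S.carrier, Tm u (a * b) = Tm u a * Tm u b := by
    intro a ha b hb
    have hb' : Tm u b ∈ S.carrier := himg ▸ Set.mem_image_of_mem _ hb
    have hbR := (hsub hb').1
    have hbM := (hsub hb).2
    apply (LoopStr.mulLeft_bij u).1
    show u * Tm u (a * b) = u * (Tm u a * Tm u b)
    rw [mul_Tm, hbR u (Tm u a), mul_Tm, ← hbR a u, mul_Tm, hbM a u]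
  refine ⟨⟨fun x hx => himg ▸ Set.mem_image_of_mem _ hx, hinj.injOn, ?_⟩, hmul⟩
  rw [Set.SurjOn, himg]
end
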